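/- arXiv:math/9307223 — 4 statements merged into one kernel-verified Lean document; each statement's English description precedes it below -/
import Mathlib

section
/- Let dλ be a positive measure on ℝ with finite moments of all orders, and let ζ_1,…,ζ_M be distinct nonzero complex numbers with 1+ζ_μ t ≠ 0 for all t in the closure of supp(dλ). Define ω_m(t) = ∏_{μ=1}^M (1+ζ_μ t)^{s_μ} with ∑ s_μ = m and 1 ≤ m ≤ 2n. Suppose there exist nodes t_ν^G ∈ supp(dλ) and weights w_ν^G (ν = 1,…,n) such that ∫ f(t) dλ(t)/ω_m(t) = ∑_{ν=1}^n w_ν^G f(t_ν^G) for all polynomials f of degree ≤ 2n−1. Then, setting t_ν = t_ν^G and λ_ν = w_ν^G ω_m(t_ν^G), the rule ∑_{ν=1}^n λ_ν g(t_ν) integrates exactly (against dλ) every function g(t) = (1+ζ_μ t)^{−s} for μ = 1,…,M and s = 1,…,s_μ. -/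
open MeasureTheory Finset

/-!
Write `ω(t) = ∏_μ (1 + ζ_μ t)^{s_μ}`. For `1 ≤ j ≤ s_μ` the cofactor
`f = ω / (1 + ζ_μ t)^j` is a polynomial of degree at most `m - j < 2n`, so the rule is exact for it:
`∫ f/ω dλ = ∑_ν w_ν f(t_ν)`. On the support of `λ`, which carries all its mass, `f/ω` is
`(1 + ζ_μ t)^{-j}`, and at each node `f(t_ν) = ω(t_ν) (1 + ζ_μ t_ν)^{-j}`.
-/

/-- The support of a measure on ℝ: points all of whose neighborhoods have
positive measure. -/
def measSupport (μ : Measure ℝ) : Set ℝ := {x | ∀ U ∈ nhds x, μ U ≠ 0}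

lemma measSupport_eq_support (μ : Measure ℝ) : measSupport μ = μ.support := by
  ext x
  simp only [measSupport, Set.mem_ofPred_eq, Measure.mem_support_iff_forall, pos_iff_ne_zero]

lemma ae_mem_measSupport (μ : Measure ℝ) : ∀ᵐ x ∂μ, x ∈ measSupport μ := by
  rw [measSupport_eq_support]
  exact Measure.support_mem_ae

namespace Polynomial

variable {R : Type*} [CommRing R] {ι : Type*} [Fintype ι]

noncomputable def omegaPoly (a : ι → R) (s : ι → ℕ) : R[X] :=
  ∏ k, (1 + C (a k) * X) ^ s k

@[simp]
lemma eval_omegaPoly (a : ι → R) (s : ι → ℕ) (z : R) :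
    (omegaPoly a s).eval z = ∏ k, (1 + a k * z) ^ s k := by
  simp [omegaPoly, eval_prod]

lemma natDegree_one_add_C_mul_X_le (c : R) : (1 + C c * X).natDegree ≤ 1 := by
  rw [add_comm, ← C_1]
  exact natDegree_linear_le

variable [DecidableEq ι]

/-- The quotient of `omegaPoly a s` by `(1 + aᵢ X) ^ j`, when `j ≤ sᵢ`. -/
noncomputable def omegaCofactor (a : ι → R) (s : ι → ℕ) (i : ι) (j : ℕ) : R[X] :=
  (1 + C (a i) * X) ^ (s i - j) * ∏ k ∈ univ.erase i, (1 + C (a k) * X) ^ s k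

lemma omegaCofactor_mul_pow (a : ι → R) (s : ι → ℕ) {i : ι} {j : ℕ} (hj : j ≤ s i) :
    omegaCofactor a s i j * (1 + C (a i) * X) ^ j = omegaPoly a s := by
  rw [omegaCofactor, mul_right_comm, ← pow_add, Nat.sub_add_cancel hj, omegaPoly,
    mul_prod_erase univ (fun k => (1 + C (a k) * X) ^ s k) (mem_univ i)]

lemma natDegree_omegaCofactor_add_le (a : ι → R) (s : ι → ℕ) {i : ι} {j : ℕ} (hj : j ≤ s i) :
    (omegaCofactor a s i j).natDegree + j ≤ ∑ k, s k := by
  have hpow : ∀ k e, ((1 + C (a k) * X) ^ e).natDegree ≤ e := fun k e =>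
    natDegree_pow_le_of_le e (natDegree_one_add_C_mul_X_le (a k)) |>.trans_eq (mul_one e)
  have hprod : (∏ k ∈ univ.erase i, (1 + C (a k) * X) ^ s k).natDegree ≤
      ∑ k ∈ univ.erase i, s k :=
    (natDegree_prod_le _ _).trans (sum_le_sum fun k _ => hpow k (s k))
  have hsplit : s i + ∑ k ∈ univ.erase i, s k = ∑ k, s k := add_sum_erase _ _ (mem_univ i)
  have hmul : (omegaCofactor a s i j).natDegree ≤ (s i - j) + ∑ k ∈ univ.erase i, s k :=
    natDegree_mul_le.trans (add_le_add (hpow i _) hprod)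
  omega

variable {K : Type*} [Field K]

lemma eval_omegaCofactor (a : ι → K) (s : ι → ℕ) {i : ι} {j : ℕ} (hj : j ≤ s i) {z : K}
    (hz : 1 + a i * z ≠ 0) :
    (omegaCofactor a s i j).eval z = (∏ k, (1 + a k * z) ^ s k) * (1 + a i * z) ^ (-(j : ℤ)) := by
  have h := congrArg (eval z) (omegaCofactor_mul_pow a s hj)
  rw [eval_mul, eval_pow, eval_omegaPoly] at h
  simp only [eval_add, eval_one, eval_mul, eval_C, eval_X] at h
  rw [← h, zpow_neg, zpow_natCast, mul_inv_cancel_right₀ (pow_ne_zero j hz)]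

lemma zpow_neg_eq_eval_omegaCofactor_div (a : ι → K) (s : ι → ℕ) {i : ι} {j : ℕ}
    (hj : j ≤ s i) {z : K} (hz : ∀ k, 1 + a k * z ≠ 0) :
    (1 + a i * z) ^ (-(j : ℤ)) = (omegaCofactor a s i j).eval z / ∏ k, (1 + a k * z) ^ s k := by
  have hω : ∏ k, (1 + a k * z) ^ s k ≠ 0 := prod_ne_zero_iff.mpr fun k _ => pow_ne_zero _ (hz k)
  rw [eval_omegaCofactor a s hj (hz i), mul_div_cancel_left₀ _ hω]

end Polynomial

open Polynomial in
theorem stmt_0_general (lam : Measure ℝ)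
    (M m n : ℕ) (hm2 : m ≤ 2 * n)
    (ζ : Fin M → ℂ)
    (hζ : ∀ (μ : Fin M), ∀ t ∈ closure (measSupport lam),
      (1 : ℂ) + ζ μ * (t : ℂ) ≠ 0)
    (s : Fin M → ℕ) (hsum : ∑ μ, s μ = m)
    (tG : Fin n → ℝ) (wG : Fin n → ℂ)
    (htG : ∀ ν, tG ν ∈ measSupport lam)
    (hexact : ∀ f : Polynomial ℂ, f.degree < (2 * n : ℕ) →
      ∫ t : ℝ, f.eval (t : ℂ) / ∏ μ, ((1 : ℂ) + ζ μ * (t : ℂ)) ^ s μ ∂lam =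
        ∑ ν, wG ν * f.eval ((tG ν : ℝ) : ℂ)) :
    ∀ (μ : Fin M) (j : ℕ), 1 ≤ j → j ≤ s μ →
      ∫ t : ℝ, ((1 : ℂ) + ζ μ * (t : ℂ)) ^ (-(j : ℤ)) ∂lam =
        ∑ ν, (wG ν * ∏ μ', ((1 : ℂ) + ζ μ' * (tG ν : ℂ)) ^ s μ') *
          ((1 : ℂ) + ζ μ * (tG ν : ℂ)) ^ (-(j : ℤ)) := by
  intro μ j hj1 hj2
  have hne : ∀ t ∈ measSupport lam, ∀ μ', (1 : ℂ) + ζ μ' * (t : ℂ) ≠ 0 :=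
    fun t ht μ' => hζ μ' t (subset_closure ht)
  have hdeg : (omegaCofactor ζ s μ j).degree < (2 * n : ℕ) := by
    have hcof := natDegree_omegaCofactor_add_le ζ s hj2
    have hlt : (omegaCofactor ζ s μ j).natDegree < 2 * n := by omega
    exact degree_le_natDegree.trans_lt (by exact_mod_cast hlt)
  calc ∫ t : ℝ, ((1 : ℂ) + ζ μ * (t : ℂ)) ^ (-(j : ℤ)) ∂lam
      = ∫ t : ℝ, (omegaCofactor ζ s μ j).eval (t : ℂ) /
          ∏ μ', ((1 : ℂ) + ζ μ' * (t : ℂ)) ^ s μ' ∂lam := by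
        refine integral_congr_ae ?_
        filter_upwards [ae_mem_measSupport lam] with t ht
        exact zpow_neg_eq_eval_omegaCofactor_div ζ s hj2 (hne t ht)
    _ = ∑ ν, wG ν * (omegaCofactor ζ s μ j).eval ((tG ν : ℝ) : ℂ) := hexact _ hdeg
    _ = _ := sum_congr rfl fun ν _ => by
        rw [mul_assoc, eval_omegaCofactor ζ s hj2 (hne _ (htG ν) μ)]

/-- Theorem 1.1, direct part, rational functions: if an `n`-point
rule with nodes in `supp(dλ)` is exact for all polynomials of degree `≤ 2n−1`
against the measure `dλ/ω_m`, where `ω_m(t) = ∏_μ (1+ζ_μ t)^{s_μ}`, then the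
rule with nodes `t_ν = t_ν^G` and weights `λ_ν = w_ν^G ω_m(t_ν^G)` integrates
exactly against `dλ` every `g(t) = (1+ζ_μ t)^{−s}`, `1 ≤ s ≤ s_μ`. -/
theorem stmt_0 (lam : Measure ℝ)
    (hmom : ∀ k : ℕ, Integrable (fun t : ℝ => t ^ k) lam)
    (M m n : ℕ) (hn : 1 ≤ n) (hm1 : 1 ≤ m) (hm2 : m ≤ 2 * n)
    (ζ : Fin M → ℂ) (hζ0 : ∀ μ, ζ μ ≠ 0) (hζinj : Function.Injective ζ)
    (hζ : ∀ (μ : Fin M), ∀ t ∈ closure (measSupport lam),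
      (1 : ℂ) + ζ μ * (t : ℂ) ≠ 0)
    (s : Fin M → ℕ) (hs : ∀ μ, 1 ≤ s μ) (hsum : ∑ μ, s μ = m)
    (tG : Fin n → ℝ) (wG : Fin n → ℂ)
    (htG : ∀ ν, tG ν ∈ measSupport lam)
    (hexact : ∀ f : Polynomial ℂ, f.degree < (2 * n : ℕ) →
      ∫ t : ℝ, f.eval (t : ℂ) / ∏ μ, ((1 : ℂ) + ζ μ * (t : ℂ)) ^ s μ ∂lam =
        ∑ ν, wG ν * f.eval ((tG ν : ℝ) : ℂ)) :
    ∀ (μ : Fin M) (j : ℕ), 1 ≤ j → j ≤ s μ →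
      ∫ t : ℝ, ((1 : ℂ) + ζ μ * (t : ℂ)) ^ (-(j : ℤ)) ∂lam =
        ∑ ν, (wG ν * ∏ μ', ((1 : ℂ) + ζ μ' * (tG ν : ℂ)) ^ s μ') *
          ((1 : ℂ) + ζ μ * (tG ν : ℂ)) ^ (-(j : ℤ)) :=
  stmt_0_general lam M m n hm2 ζ hζ s hsum tG wG htG hexact
end

section
/- ∫_{−1}^{1} (πt/2)/sin(πt/2) dt = 8C/π, where C = ∑_{k=0}^∞ (−1)^k/(2k+1)^2 is Catalan's constant (the integrand extended by value 1 at t = 0). -/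
open Real intervalIntegral

/-!
The integrand is `(sinc (π t / 2))⁻¹`. Substituting `x = π t / 2` and using evenness, the
integral is `(4 / π) ∫₀^{π/2} x / sin x dx`; the substitution `x = 2 arctan t` turns this into
`(8 / π) ∫₀¹ arctan t / t dt`. Integrating the Taylor series of `arctan t / t` term by term
gives Catalan's constant, dominated convergence being justified by the bound `1` on the
partial sums of an alternating series with decreasing terms.
-/

open Filter Topology MeasureTheory Set
open scoped Interval

theorem Antitone.sum_range_alternating_mem_Icc {E : Type*} [Ring E] [PartialOrder E]
    [IsOrderedRing E] [TopologicalSpace E] [OrderClosedTopology E] {f : ℕ → E}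
    (hfa : Antitone f) (hf : ∀ i, 0 ≤ f i) (n : ℕ) :
    ∑ i ∈ Finset.range n, (-1) ^ i * f i ∈ Icc 0 (f 0) := by
  -- The truncation `g` of `f` is antitone and its alternating series converges to the given
  -- partial sum, which therefore lies between the first two partial sums of `g`.
  set g : ℕ → E := fun i ↦ if i < n then f i else 0
  have hga : Antitone g := fun i j hij ↦ by
    by_cases hj : j < n
    · simp only [g, hj, if_pos (hij.trans_lt hj)]; exact hfa hij
    · simp only [g, hj, if_false]; split_ifs <;> simp [hf]
  have hg : Tendsto (fun m ↦ ∑ i ∈ Finset.range m, (-1) ^ i * g i) atTop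
      (𝓝 (∑ i ∈ Finset.range n, (-1) ^ i * f i)) := by
    refine tendsto_atTop_of_eventually_const (i₀ := n) fun m hm ↦ ?_
    rw [← Finset.sum_range_add_sum_Ico _ hm,
      Finset.sum_eq_zero (s := Finset.Ico n m) fun i hi ↦ ?_, add_zero]
    · exact Finset.sum_congr rfl fun i hi ↦ by simp [g, Finset.mem_range.mp hi]
    · simp [g, (Finset.mem_Ico.mp hi).1.not_gt]
  constructor
  · simpa using hga.alternating_series_le_tendsto hg 0
  · rcases n.eq_zero_or_pos with rfl | hn
    · simpa using hf 0
    · simpa [g, hn] using hga.tendsto_le_alternating_series hg 0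

theorem summable_neg_one_pow_div_two_mul_add_one_sq :
    Summable fun k : ℕ ↦ (-1 : ℝ) ^ k / (2 * (k : ℝ) + 1) ^ 2 := by
  have h := (Real.summable_one_div_nat_pow.mpr one_lt_two).comp_injective
    (fun a b h ↦ by simpa using h : Function.Injective fun k : ℕ ↦ 2 * k + 1)
  simpa [div_eq_mul_inv] using h.alternating

theorem Real.hasSum_arctan_div_self {t : ℝ} (ht₀ : t ≠ 0) (ht : |t| < 1) :
    HasSum (fun k : ℕ ↦ (-1) ^ k * (t ^ (2 * k) / (2 * k + 1))) (arctan t / t) := by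
  refine ((hasSum_arctan ht).div_const t).congr_fun fun k ↦ ?_
  rw [pow_succ]
  push_cast
  field_simp

theorem integral_arctan_div_self :
    ∫ t in (0 : ℝ)..1, arctan t / t = ∑' k : ℕ, (-1 : ℝ) ^ k / (2 * (k : ℝ) + 1) ^ 2 := by
  set F : ℕ → ℝ → ℝ := fun n t ↦ ∑ k ∈ Finset.range n, (-1) ^ k * (t ^ (2 * k) / (2 * k + 1))
  have hF_integral (n : ℕ) :
      ∫ t in (0 : ℝ)..1, F n t = ∑ k ∈ Finset.range n, (-1 : ℝ) ^ k / (2 * (k : ℝ) + 1) ^ 2 := by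
    rw [intervalIntegral.integral_finsetSum fun k _ ↦ by
      apply Continuous.intervalIntegrable; fun_prop]
    refine Finset.sum_congr rfl fun k _ ↦ ?_
    rw [intervalIntegral.integral_const_mul, intervalIntegral.integral_div, integral_pow]
    push_cast
    field_simp
    simp
  have hF_bound (n : ℕ) {t : ℝ} (ht : t ∈ Ι (0 : ℝ) 1) : ‖F n t‖ ≤ 1 := by
    obtain ⟨ht₀, ht₁⟩ : 0 < t ∧ t ≤ 1 := by rwa [uIoc_of_le zero_le_one] at ht
    have hmem := Antitone.sum_range_alternating_mem_Icc (f := fun k ↦ t ^ (2 * k) / (2 * k + 1))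
      (antitone_nat_of_succ_le fun k ↦ div_le_div₀ (by positivity)
        (pow_le_pow_of_le_one ht₀.le ht₁ (by omega)) (by positivity) (by push_cast; linarith))
      (fun k ↦ by positivity) n
    norm_num at hmem
    exact abs_le.mpr ⟨by linarith [hmem.1], hmem.2⟩
  have hF_lim : ∀ᵐ t, t ∈ Ι (0 : ℝ) 1 → Tendsto (F · t) atTop (𝓝 (arctan t / t)) := by
    filter_upwards [Measure.ae_ne volume 1] with t ht₁ ht
    rw [uIoc_of_le zero_le_one] at ht
    exact (hasSum_arctan_div_self ht.1.ne'
      (abs_lt.mpr ⟨by linarith [ht.1], lt_of_le_of_ne ht.2 ht₁⟩)).tendsto_sum_nat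
  have hlim := tendsto_integral_filter_of_dominated_convergence (fun _ ↦ 1)
    (Eventually.of_forall fun n ↦ (by fun_prop : Continuous (F n)).aestronglyMeasurable)
    (Eventually.of_forall fun n ↦ Eventually.of_forall fun t ↦ hF_bound n)
    intervalIntegrable_const hF_lim
  simp only [hF_integral] at hlim
  exact tendsto_nhds_unique hlim summable_neg_one_pow_div_two_mul_add_one_sq.hasSum.tendsto_sum_nat

theorem Real.sinc_pos {x : ℝ} (hx : |x| < π) : 0 < sinc x := by
  wlog hx₀ : 0 ≤ x generalizing x
  · simpa using this (x := -x) (by rwa [abs_neg]) (by linarith)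
  rcases hx₀.eq_or_lt with rfl | hx₀
  · simp
  · rw [sinc_of_ne_zero hx₀.ne']
    exact div_pos (sin_pos_of_pos_of_lt_pi hx₀ (abs_lt.mp hx).2) hx₀

theorem Real.continuousOn_inv_sinc : ContinuousOn (fun x ↦ (sinc x)⁻¹) (Ioo (-π) π) :=
  continuous_sinc.continuousOn.inv₀ fun _ hx ↦ (sinc_pos (abs_lt.mpr hx)).ne'

theorem Real.sin_two_mul_arctan (t : ℝ) : sin (2 * arctan t) = 2 * t / (1 + t ^ 2) := by
  have h : √(1 + t ^ 2) ^ 2 = 1 + t ^ 2 := sq_sqrt (by positivity)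
  rw [sin_two_mul, sin_arctan, cos_arctan]
  field_simp
  rw [h]

theorem Real.inv_sinc_two_mul_arctan_mul {t : ℝ} (ht : t ≠ 0) :
    (sinc (2 * arctan t))⁻¹ * (2 / (1 + t ^ 2)) = 2 * (arctan t / t) := by
  have harctan : arctan t ≠ 0 := arctan_eq_zero_iff.not.mpr ht
  rw [sinc_of_ne_zero (by positivity), sin_two_mul_arctan]
  field_simp

theorem intervalIntegral.integral_neg_eq_two_smul_of_even {E : Type*} [NormedAddCommGroup E]
    [NormedSpace ℝ E] {f : ℝ → E} (hf : ∀ x, f (-x) = f x) {a : ℝ}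
    (hint : IntervalIntegrable f volume 0 a) :
    ∫ x in -a..a, f x = (2 : ℝ) • ∫ x in 0..a, f x := by
  have hneg : ∫ x in -a..0, f x = ∫ x in 0..a, f x := by
    simpa [hf] using (integral_comp_neg (a := 0) (b := a) f).symm
  have hint' : IntervalIntegrable f volume (-a) 0 := by
    simpa [hf] using (IntervalIntegrable.iff_comp_neg).mp hint |>.symm
  rw [← integral_add_adjacent_intervals hint' hint, hneg, two_smul]

theorem integral_inv_sinc_zero_pi_div_two :
    ∫ x in (0 : ℝ)..π / 2, (sinc x)⁻¹ = 2 * ∑' k : ℕ, (-1 : ℝ) ^ k / (2 * (k : ℝ) + 1) ^ 2 := by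
  have hderiv (t : ℝ) : HasDerivAt (fun t ↦ 2 * arctan t) (2 / (1 + t ^ 2)) t := by
    simpa [div_eq_mul_inv] using (hasDerivAt_arctan t).const_mul 2
  have hmaps : (fun t ↦ 2 * arctan t) '' [[0, 1]] ⊆ Ioo (-π) π := by
    rintro _ ⟨t, -, rfl⟩
    constructor <;> linarith [neg_pi_div_two_lt_arctan t, arctan_lt_pi_div_two t]
  have hsubst := integral_comp_mul_deriv' (fun t _ ↦ hderiv t)
    (continuous_const.div (by fun_prop) fun t ↦ by positivity).continuousOn
    (continuousOn_inv_sinc.mono hmaps)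
  rw [arctan_zero, arctan_one, mul_zero, show 2 * (π / 4) = π / 2 by ring] at hsubst
  rw [← hsubst, ← integral_arctan_div_self, ← intervalIntegral.integral_const_mul]
  refine integral_congr_ae (Eventually.of_forall fun t ht ↦ ?_)
  rw [uIoc_of_le zero_le_one] at ht
  exact inv_sinc_two_mul_arctan_mul ht.1.ne'

/-- `∫_{−1}^1 (πt/2)/sin(πt/2) dt = 8C/π`, where
`C = ∑_{k=0}^∞ (−1)^k/(2k+1)²` is Catalan's constant (the integrand extended by
the value `1` at `t = 0`). -/
theorem stmt_10 :
    (∫ t in (-1 : ℝ)..1,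
        (if t = 0 then 1 else (π * t / 2) / Real.sin (π * t / 2))) =
      8 * (∑' k : ℕ, (-1 : ℝ) ^ k / (2 * (k : ℝ) + 1) ^ 2) / π := by
  have hintegrand (t : ℝ) : (if t = 0 then 1 else (π * t / 2) / Real.sin (π * t / 2))
      = (sinc (π / 2 * t))⁻¹ := by
    rcases eq_or_ne t 0 with rfl | ht
    · simp
    · rw [if_neg ht, sinc_of_ne_zero (by positivity), inv_div]
      ring_nf
  have hint : IntervalIntegrable (fun x ↦ (sinc x)⁻¹) volume 0 (π / 2) := by
    refine (continuousOn_inv_sinc.mono fun x hx ↦ ?_).intervalIntegrable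
    rw [uIcc_of_le (by positivity)] at hx
    constructor <;> linarith [hx.1, hx.2, pi_pos]
  simp_rw [hintegrand]
  rw [integral_comp_mul_left (fun x ↦ (sinc x)⁻¹) (by positivity), mul_neg_one, mul_one,
    integral_neg_eq_two_smul_of_even (fun x ↦ by rw [sinc_neg]) hint,
    integral_inv_sinc_zero_pi_div_two, smul_eq_mul]
  field_simp
  ring
end

section
/- ∫_{−1}^{1} ( (πt/2)/sin(πt/2) )^2 dt = 4 ln 2 (the integrand extended by the value 1 at t = 0). -/
/-!
Substituting `x = πt/2` turns the integral into `(4/π) ∫₀^{π/2} (x / sin x)² dx`, using that the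
integrand is even. On `(0, π/2)` the function `x²/sin² x + 2 log sin x` is the derivative of
`2x log sin x - x² cot x`, which vanishes at both ends (at `0` as a limit, since
`x log sin x → 0`). Hence `∫₀^{π/2} (x / sin x)² dx = -2 ∫₀^{π/2} log sin x dx = π log 2`.
-/

open Real intervalIntegral MeasureTheory Set

theorem intervalIntegral.integral_neg_self_of_even {E : Type*} [NormedAddCommGroup E]
    [NormedSpace ℝ E] {f : ℝ → E} (hf : ∀ x, f (-x) = f x) {a : ℝ}
    (hint : IntervalIntegrable f volume 0 a) :
    ∫ x in -a..a, f x = 2 • ∫ x in 0..a, f x := by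
  have hint_neg : IntervalIntegrable f volume (-a) 0 := by
    simpa [hf] using ((IntervalIntegrable.iff_comp_neg).1 hint).symm
  have hneg : ∫ x in -a..0, f x = ∫ x in 0..a, f x := by
    simpa [hf] using (integral_comp_neg (a := 0) (b := a) f).symm
  rw [← integral_add_adjacent_intervals hint_neg hint, hneg, two_nsmul]

namespace Real

lemma sinc_pos_s11 {x : ℝ} (hx : x ∈ Ioo (-π) π) : 0 < sinc x := by
  rcases lt_trichotomy x 0 with h | rfl | h
  · rw [← sinc_neg, sinc_of_ne_zero (neg_ne_zero.2 h.ne)]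
    exact div_pos (sin_pos_of_pos_of_lt_pi (neg_pos.2 h) (by linarith [hx.1])) (neg_pos.2 h)
  · simp
  · rw [sinc_of_ne_zero h.ne']
    exact div_pos (sin_pos_of_pos_of_lt_pi h hx.2) h

lemma continuousOn_inv_sinc_s11 : ContinuousOn (fun x => (sinc x)⁻¹) (Ioo (-π) π) :=
  continuous_sinc.continuousOn.inv₀ fun _ hx => (sinc_pos_s11 hx).ne'

lemma inv_sinc_of_ne_zero {x : ℝ} (hx : x ≠ 0) : (sinc x)⁻¹ = x / sin x := by
  rw [sinc_of_ne_zero hx, inv_div]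

lemma hasDerivAt_two_mul_mul_log_sin_sub_sq_mul_cot {x : ℝ} (hx : sin x ≠ 0) :
    HasDerivAt (fun x => 2 * x * log (sin x) - x ^ 2 * (cos x / sin x))
      ((sinc x)⁻¹ ^ 2 + 2 * log (sin x)) x := by
  have hx0 : x ≠ 0 := by rintro rfl; simp at hx
  refine ((((hasDerivAt_id x).const_mul 2).mul ((hasDerivAt_sin x).log hx)).sub
    ((hasDerivAt_pow 2 x).mul ((hasDerivAt_cos x).div (hasDerivAt_sin x) hx))).congr_deriv ?_
  simp only [id, Pi.div_apply, inv_sinc_of_ne_zero hx0]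
  field_simp
  linear_combination x ^ 2 * sin_sq_add_cos_sq x

/-- Near `0` the primitive is a product of functions continuous at `0`. -/
lemma two_mul_mul_log_sin_sub_sq_mul_cot_eq (x : ℝ) :
    2 * x * log (sin x) - x ^ 2 * (cos x / sin x) =
      (sinc x)⁻¹ * (2 * (sin x * log (sin x)) - x * cos x) := by
  rcases eq_or_ne x 0 with rfl | hx
  · simp
  rcases eq_or_ne (sin x) 0 with hs | hs
  · simp [sinc_of_ne_zero hx, hs]
  · rw [inv_sinc_of_ne_zero hx]
    field_simp

lemma continuousOn_two_mul_mul_log_sin_sub_sq_mul_cot :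
    ContinuousOn (fun x => 2 * x * log (sin x) - x ^ 2 * (cos x / sin x)) (Ioo (-π) π) := by
  simp_rw [two_mul_mul_log_sin_sub_sq_mul_cot_eq]
  exact continuousOn_inv_sinc_s11.mul (by fun_prop)

lemma intervalIntegrable_inv_sinc_sq {a b : ℝ} (ha : a ∈ Ioo (-π) π) (hb : b ∈ Ioo (-π) π) :
    IntervalIntegrable (fun x => (sinc x)⁻¹ ^ 2) volume a b :=
  ((continuousOn_inv_sinc_s11.mono (ordConnected_Ioo.uIcc_subset ha hb)).pow 2).intervalIntegrable

theorem integral_inv_sinc_sq_zero_pi_div_two : ∫ x in 0..π / 2, (sinc x)⁻¹ ^ 2 = π * log 2 := by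
  have hsub : Icc 0 (π / 2) ⊆ Ioo (-π) π := fun x hx =>
    ⟨by linarith [pi_pos, hx.1], by linarith [pi_pos, hx.2]⟩
  have hint := intervalIntegrable_inv_sinc_sq (hsub ⟨le_rfl, pi_div_two_pos.le⟩)
    (hsub ⟨pi_div_two_pos.le, le_rfl⟩)
  have hint_log : IntervalIntegrable (fun x => 2 * log (sin x)) volume 0 (π / 2) :=
    intervalIntegrable_log_sin.const_mul 2
  have hftc := integral_eq_sub_of_hasDerivAt_of_le pi_div_two_pos.le
    (continuousOn_two_mul_mul_log_sin_sub_sq_mul_cot.mono hsub)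
    (fun x hx => hasDerivAt_two_mul_mul_log_sin_sub_sq_mul_cot
      (sin_pos_of_pos_of_lt_pi hx.1 (by linarith [hx.2, pi_pos])).ne')
    (hint.add hint_log)
  rw [integral_add hint hint_log, intervalIntegral.integral_const_mul,
    integral_log_sin_zero_pi_div_two] at hftc
  simp only [sin_pi_div_two, cos_pi_div_two, log_one, sin_zero, log_zero, mul_zero, zero_div,
    div_zero, zero_pow two_ne_zero, sub_self] at hftc
  linarith

end Real

/-- `∫_{−1}^1 ((πt/2)/sin(πt/2))² dt = 4 ln 2` (integrand
extended by the value `1` at `t = 0`). -/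
theorem stmt_11 :
    (∫ t in (-1 : ℝ)..1,
        (if t = 0 then 1 else (π * t / 2) / Real.sin (π * t / 2)) ^ 2) =
      4 * Real.log 2 := by
  have hintegrand : (fun t : ℝ => (if t = 0 then 1 else (π * t / 2) / sin (π * t / 2)) ^ 2) =
      fun t => (sinc (π / 2 * t))⁻¹ ^ 2 := by
    funext t
    rcases eq_or_ne t 0 with rfl | ht
    · simp
    · rw [if_neg ht, inv_sinc_of_ne_zero (by positivity)]
      ring_nf
  have hint := intervalIntegrable_inv_sinc_sq (a := 0) (b := π / 2)
    ⟨by linarith [pi_pos], pi_pos⟩ ⟨by linarith [pi_pos], by linarith [pi_pos]⟩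
  rw [hintegrand, integral_comp_mul_left (fun x => (sinc x)⁻¹ ^ 2) (by positivity), mul_one,
    mul_neg_one, integral_neg_self_of_even (by simp) hint, integral_inv_sinc_sq_zero_pi_div_two,
    smul_eq_mul, nsmul_eq_mul]
  field_simp
  ring
end

section
/- Let ξ_1,…,ξ_M be distinct nonzero reals, m = 2M−1, and ω_m(t) = (1+ξ_M t) ∏_{ν=1}^{M−1}(1+ξ_ν t)^2. Then for t with ω_m(t) ≠ 0, 1/ω_m(t) = c_M'/(t+1/ξ_M) + ∑_{ν=1}^{M−1} [ c_ν'/(t+1/ξ_ν) + d_ν'/(t+1/ξ_ν)^2 ], where c_M' = ξ_M^{m−2}/∏_{ν=1}^{M−1}(ξ_M−ξ_ν)^2, d_ν' = ξ_ν^{m−4} / [ (ξ_ν−ξ_M) ∏_{μ≠ν, μ≤M−1}(ξ_ν−ξ_μ)^2 ], and c_ν' = −ξ_ν^{m−3} ( ξ_M + 2(ξ_ν−ξ_M) ∑_{μ≠ν, μ≤M−1} ξ_μ/(ξ_ν−ξ_μ) ) / [ (ξ_ν−ξ_M)^2 ∏_{μ≠ν, μ≤M−1}(ξ_ν−ξ_μ)^2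 ]. -/
/-!
Since `1 + ξ t = ξ (t + 1/ξ)`, it suffices to expand `1 / ((t + c) ∏_{ν ∈ s} (t + b_ν)²)` with
`c = 1/ξ_M` and `b_ν = 1/ξ_ν`, which goes by induction on `s`. Dividing the expansion for `s` by
`(t + b_k)²` and splitting each term rescales the old coefficients, while the new coefficients of
`1/(t + b_k)²` and `1/(t + b_k)` add up to the value `h(-b_k)` and the derivative `h'(-b_k)` of the
old expansion, i.e. of `h t = 1 / ((t + c) ∏_{ν ∈ s} (t + b_ν)²)`; `h'/h` is a logarithmic derivative.
-/

open Finset Filter Topology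

lemma hasDerivAt_const_div_add (a p : ℝ) {x : ℝ} (hx : x + p ≠ 0) :
    HasDerivAt (fun t => a / (t + p)) (-(a / (x + p) ^ 2)) x :=
  ((hasDerivAt_const x a).div ((hasDerivAt_id' x).add_const p) hx).congr_deriv (by simp [neg_div])

lemma hasDerivAt_const_div_add_sq (a p : ℝ) {x : ℝ} (hx : x + p ≠ 0) :
    HasDerivAt (fun t => a / (t + p) ^ 2) (-(2 * a / (x + p) ^ 3)) x :=
  ((hasDerivAt_const x a).div (((hasDerivAt_id' x).add_const p).fun_pow 2)
    (pow_ne_zero 2 hx)).congr_deriv (by field_simp; ring)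

lemma one_div_sub_one_div_sq {a p : ℝ} (ha : a ≠ 0) (hp : p ≠ 0) :
    (1 / a - 1 / p) ^ 2 = (p - a) ^ 2 / (p ^ 2 * a ^ 2) := by
  field_simp

lemma inv_one_div_sub_one_div {a p : ℝ} (ha : a ≠ 0) (hp : p ≠ 0) :
    (1 / a - 1 / p)⁻¹ = a * p / (p - a) := by
  rw [div_sub_div _ _ ha hp, inv_div]
  ring

lemma prod_one_div_sub_one_div_sq {ι : Type*} {s : Finset ι} {ξ : ι → ℝ} {x : ℝ}
    (hξ : ∀ μ ∈ s, ξ μ ≠ 0) (hx : x ≠ 0) :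
    ∏ μ ∈ s, (1 / ξ μ - 1 / x) ^ 2 =
      (∏ μ ∈ s, (x - ξ μ) ^ 2) / ((x ^ 2) ^ #s * ∏ μ ∈ s, ξ μ ^ 2) := by
  rw [← prod_const, ← prod_mul_distrib, ← prod_div_distrib]
  exact prod_congr rfl fun μ hμ => one_div_sub_one_div_sq (hξ μ hμ) hx

lemma zpow_two_mul_sub_one {a : ℝ} (ha : a ≠ 0) (n : ℕ) :
    a ^ (2 * (n : ℤ) - 1) = (a ^ 2) ^ n / a := by
  rw [zpow_sub_one₀ ha, zpow_mul, zpow_natCast, zpow_ofNat, div_eq_mul_inv]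

namespace PartialFraction

/-- The coefficients of the `t + q` terms are the value and the derivative at `t = -q` of the
numerator on the left, written with `-q + p` so that they match `expansion` and `expansionDeriv`. -/
lemma simple_div_sq_eq (A p q t : ℝ) (hp : t + p ≠ 0) (hq : t + q ≠ 0) (hpq : p ≠ q) :
    A / (t + p) / (t + q) ^ 2 =
      A / (q - p) ^ 2 / (t + p) + -(A / (-q + p) ^ 2) / (t + q) + A / (-q + p) / (t + q) ^ 2 := by
  have : q - p ≠ 0 := sub_ne_zero.2 hpq.symm
  have : -q + p ≠ 0 := by rwa [neg_add_eq_sub, sub_ne_zero]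
  field_simp
  ring

lemma double_div_sq_eq (B C p q t : ℝ) (hp : t + p ≠ 0) (hq : t + q ≠ 0) (hpq : p ≠ q) :
    (B / (t + p) + C / (t + p) ^ 2) / (t + q) ^ 2 =
      ((B / (q - p) ^ 2 - 2 * C / (q - p) ^ 3) / (t + p) + C / (q - p) ^ 2 / (t + p) ^ 2) +
        (-(B / (-q + p) ^ 2) - 2 * C / (-q + p) ^ 3) / (t + q) +
        (B / (-q + p) + C / (-q + p) ^ 2) / (t + q) ^ 2 := by
  have : q - p ≠ 0 := sub_ne_zero.2 hpq.symm
  have : -q + p ≠ 0 := by rwa [neg_add_eq_sub, sub_ne_zero]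
  field_simp
  ring

variable {ι : Type*} (c : ℝ) (b : ι → ℝ)

noncomputable def denom (s : Finset ι) (t : ℝ) : ℝ := (t + c) * ∏ ν ∈ s, (t + b ν) ^ 2

noncomputable def logDerivDenom (s : Finset ι) (t : ℝ) : ℝ :=
  (t + c)⁻¹ + 2 * ∑ ν ∈ s, (t + b ν)⁻¹

noncomputable def simpleCoeff (s : Finset ι) : ℝ := (∏ ν ∈ s, (b ν - c) ^ 2)⁻¹

variable [DecidableEq ι]

noncomputable def sqCoeff (s : Finset ι) (ν : ι) : ℝ := (denom c b (s.erase ν) (-b ν))⁻¹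

noncomputable def linCoeff (s : Finset ι) (ν : ι) : ℝ :=
  -sqCoeff c b s ν * logDerivDenom c b (s.erase ν) (-b ν)

noncomputable def expansion (s : Finset ι) (t : ℝ) : ℝ :=
  simpleCoeff c b s / (t + c) +
    ∑ ν ∈ s, (linCoeff c b s ν / (t + b ν) + sqCoeff c b s ν / (t + b ν) ^ 2)

noncomputable def expansionDeriv (s : Finset ι) (t : ℝ) : ℝ :=
  -(simpleCoeff c b s / (t + c) ^ 2) +
    ∑ ν ∈ s, (-(linCoeff c b s ν / (t + b ν) ^ 2) - 2 * sqCoeff c b s ν / (t + b ν) ^ 3)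

variable {c b}

omit [DecidableEq ι] in
lemma denom_ne_zero_iff {s : Finset ι} {t : ℝ} :
    denom c b s t ≠ 0 ↔ t + c ≠ 0 ∧ ∀ ν ∈ s, t + b ν ≠ 0 := by
  simp [denom, prod_eq_zero_iff]

omit [DecidableEq ι] in
lemma continuous_denom (s : Finset ι) : Continuous (denom c b s) := by
  unfold denom
  fun_prop

lemma denom_insert {k : ι} {s : Finset ι} (hk : k ∉ s) (t : ℝ) :
    denom c b (insert k s) t = denom c b s t * (t + b k) ^ 2 := by
  rw [denom, denom, prod_insert hk]
  ring

lemma hasDerivAt_inv_denom {s : Finset ι} {x : ℝ} (hx : denom c b s x ≠ 0) :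
    HasDerivAt (fun t => (denom c b s t)⁻¹) (-(denom c b s x)⁻¹ * logDerivDenom c b s x) x := by
  induction s using Finset.induction_on with
  | empty =>
    simp only [denom, logDerivDenom, prod_empty, mul_one, sum_empty, mul_zero, add_zero] at hx ⊢
    exact (((hasDerivAt_id' x).add_const c).inv hx).congr_deriv (by field_simp)
  | insert k u hk ih =>
    rw [denom_insert hk] at hx
    have hk' : x + b k ≠ 0 := (pow_ne_zero_iff two_ne_zero).1 (right_ne_zero_of_mul hx)
    have hsq := hasDerivAt_const_div_add_sq 1 (b k) hk'
    simp only [one_div] at hsq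
    simp_rw [denom_insert hk, mul_inv]
    refine ((ih (left_ne_zero_of_mul hx)).fun_mul hsq).congr_deriv ?_
    rw [logDerivDenom, logDerivDenom, sum_insert hk]
    field_simp
    ring

lemma hasDerivAt_expansion {s : Finset ι} {x : ℝ} (hx : denom c b s x ≠ 0) :
    HasDerivAt (expansion c b s) (expansionDeriv c b s x) x := by
  obtain ⟨hxc, hxb⟩ := denom_ne_zero_iff.1 hx
  refine (hasDerivAt_const_div_add _ _ hxc).add (HasDerivAt.fun_sum fun ν hν => ?_)
  exact ((hasDerivAt_const_div_add _ _ (hxb ν hν)).add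
    (hasDerivAt_const_div_add_sq _ _ (hxb ν hν))).congr_deriv (by ring)

lemma expansionDeriv_eq {s : Finset ι}
    (hs : ∀ t, denom c b s t ≠ 0 → (denom c b s t)⁻¹ = expansion c b s t)
    {x : ℝ} (hx : denom c b s x ≠ 0) :
    expansionDeriv c b s x = -(denom c b s x)⁻¹ * logDerivDenom c b s x := by
  have hev : (fun t => (denom c b s t)⁻¹) =ᶠ[𝓝 x] expansion c b s :=
    ((continuous_denom s).continuousAt.eventually_ne hx).mono hs
  exact (hasDerivAt_expansion hx).unique
    ((hasDerivAt_inv_denom hx).congr_of_eventuallyEq hev.symm)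

lemma expansion_div_sq {s : Finset ι} {q t : ℝ} (ht : denom c b s t ≠ 0) (hq : t + q ≠ 0)
    (hqc : c ≠ q) (hqb : ∀ ν ∈ s, b ν ≠ q) :
    expansion c b s t / (t + q) ^ 2 =
      simpleCoeff c b s / (q - c) ^ 2 / (t + c) +
        ∑ ν ∈ s, ((linCoeff c b s ν / (q - b ν) ^ 2 - 2 * sqCoeff c b s ν / (q - b ν) ^ 3) /
          (t + b ν) + sqCoeff c b s ν / (q - b ν) ^ 2 / (t + b ν) ^ 2) +
        expansionDeriv c b s (-q) / (t + q) + expansion c b s (-q) / (t + q) ^ 2 := by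
  obtain ⟨htc, htb⟩ := denom_ne_zero_iff.1 ht
  rw [expansion, add_div, sum_div, simple_div_sq_eq _ _ _ _ htc hq hqc,
    sum_congr rfl fun ν hν => double_div_sq_eq _ _ _ _ _ (htb ν hν) hq (hqb ν hν)]
  simp only [sum_add_distrib, ← sum_div, expansion, expansionDeriv, add_div]
  ring

lemma simpleCoeff_insert {k : ι} {s : Finset ι} (hk : k ∉ s) :
    simpleCoeff c b (insert k s) = simpleCoeff c b s / (b k - c) ^ 2 := by
  rw [simpleCoeff, simpleCoeff, prod_insert hk, mul_inv, div_eq_mul_inv, mul_comm]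

lemma sqCoeff_insert_self {k : ι} {s : Finset ι} (hk : k ∉ s) :
    sqCoeff c b (insert k s) k = (denom c b s (-b k))⁻¹ := by
  rw [sqCoeff, erase_insert hk]

lemma linCoeff_insert_self {k : ι} {s : Finset ι} (hk : k ∉ s) :
    linCoeff c b (insert k s) k = -(denom c b s (-b k))⁻¹ * logDerivDenom c b s (-b k) := by
  rw [linCoeff, sqCoeff_insert_self hk, erase_insert hk]

lemma sqCoeff_insert {k ν : ι} {s : Finset ι} (hk : k ∉ s) (hν : ν ∈ s) :
    sqCoeff c b (insert k s) ν = sqCoeff c b s ν / (b k - b ν) ^ 2 := by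
  have hkν : k ≠ ν := (ne_of_mem_of_not_mem hν hk).symm
  rw [sqCoeff, sqCoeff, erase_insert_of_ne hkν, denom_insert (fun h => hk (mem_of_mem_erase h)),
    mul_inv, div_eq_mul_inv, neg_add_eq_sub]

lemma linCoeff_insert {k ν : ι} {s : Finset ι} (hk : k ∉ s) (hν : ν ∈ s) (hb : b k ≠ b ν) :
    linCoeff c b (insert k s) ν =
      linCoeff c b s ν / (b k - b ν) ^ 2 - 2 * sqCoeff c b s ν / (b k - b ν) ^ 3 := by
  have hkν : k ≠ ν := (ne_of_mem_of_not_mem hν hk).symm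
  have : b k - b ν ≠ 0 := sub_ne_zero.2 hb
  rw [linCoeff, linCoeff, sqCoeff_insert hk hν, erase_insert_of_ne hkν, logDerivDenom,
    logDerivDenom, sum_insert (fun h => hk (mem_of_mem_erase h))]
  simp only [neg_add_eq_sub]
  field_simp
  ring

theorem inv_denom_eq_expansion {s : Finset ι} (hb : Set.InjOn b s) (hc : ∀ ν ∈ s, b ν ≠ c)
    {t : ℝ} (ht : denom c b s t ≠ 0) : (denom c b s t)⁻¹ = expansion c b s t := by
  induction s using Finset.induction_on generalizing t with
  | empty => simp [denom, expansion, simpleCoeff]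
  | insert k s hk ih =>
    have hbk : ∀ ν ∈ s, b ν ≠ b k := fun ν hν h =>
      ne_of_mem_of_not_mem hν hk (hb (mem_insert_of_mem hν) (mem_insert_self k s) h)
    have hck : c ≠ b k := (hc k (mem_insert_self k s)).symm
    have ih' : ∀ {t}, denom c b s t ≠ 0 → (denom c b s t)⁻¹ = expansion c b s t :=
      ih (hb.mono (by simp)) fun ν hν => hc ν (mem_insert_of_mem hν)
    have hpole : denom c b s (-b k) ≠ 0 := by
      refine denom_ne_zero_iff.2 ⟨?_, fun ν hν => ?_⟩ <;> rw [neg_add_eq_sub, sub_ne_zero]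
      exacts [hck, hbk ν hν]
    have hold : ∀ ν ∈ s,
        linCoeff c b (insert k s) ν / (t + b ν) + sqCoeff c b (insert k s) ν / (t + b ν) ^ 2 =
          (linCoeff c b s ν / (b k - b ν) ^ 2 - 2 * sqCoeff c b s ν / (b k - b ν) ^ 3) /
            (t + b ν) + sqCoeff c b s ν / (b k - b ν) ^ 2 / (t + b ν) ^ 2 := fun ν hν => by
      rw [linCoeff_insert hk hν (hbk ν hν).symm, sqCoeff_insert hk hν]
    rw [denom_insert hk] at ht ⊢
    have hs := left_ne_zero_of_mul ht
    have htk : t + b k ≠ 0 := (pow_ne_zero_iff two_ne_zero).1 (right_ne_zero_of_mul ht)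
    rw [mul_inv, ← div_eq_mul_inv, ih' hs, expansion_div_sq hs htk hck hbk,
      expansionDeriv_eq (fun _ => ih') hpole, ← ih' hpole, ← linCoeff_insert_self hk,
      ← sqCoeff_insert_self hk, expansion, sum_insert hk, simpleCoeff_insert hk, sum_congr rfl hold]
    ring

variable {s : Finset ι} {ξ : ι → ℝ} {x : ℝ}

omit [DecidableEq ι] in
lemma mul_prod_sq_eq_denom (hξ : ∀ μ ∈ s, ξ μ ≠ 0) (hx : x ≠ 0) (t : ℝ) :
    (1 + x * t) * ∏ μ ∈ s, (1 + ξ μ * t) ^ 2 =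
      (x * ∏ μ ∈ s, ξ μ ^ 2) * denom (1 / x) (fun μ => 1 / ξ μ) s t := by
  have one_add_mul : ∀ a : ℝ, a ≠ 0 → 1 + a * t = a * (t + 1 / a) := fun a ha => by
    field_simp
    ring
  rw [denom, one_add_mul x hx,
    prod_congr rfl fun μ hμ => by rw [one_add_mul _ (hξ μ hμ), mul_pow], prod_mul_distrib]
  ring

omit [DecidableEq ι] in
lemma simpleCoeff_one_div (hξ : ∀ μ ∈ s, ξ μ ≠ 0) (hx : x ≠ 0) :
    (x * ∏ μ ∈ s, ξ μ ^ 2)⁻¹ * simpleCoeff (1 / x) (fun μ => 1 / ξ μ) s =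
      x ^ (2 * (#s : ℤ) - 1) / ∏ μ ∈ s, (x - ξ μ) ^ 2 := by
  have hP : ∏ μ ∈ s, ξ μ ^ 2 ≠ 0 := prod_ne_zero_iff.2 fun μ hμ => pow_ne_zero 2 (hξ μ hμ)
  rw [simpleCoeff, prod_one_div_sub_one_div_sq hξ hx, zpow_two_mul_sub_one hx]
  field_simp

lemma sqCoeff_one_div (hξ : ∀ μ ∈ s, ξ μ ≠ 0) (hx : x ≠ 0) (hinj : Set.InjOn ξ s)
    (hξx : ∀ μ ∈ s, ξ μ ≠ x) {ν : ι} (hν : ν ∈ s) :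
    (x * ∏ μ ∈ s, ξ μ ^ 2)⁻¹ * sqCoeff (1 / x) (fun μ => 1 / ξ μ) s ν =
      ξ ν ^ (2 * (#s : ℤ) - 3) / ((ξ ν - x) * ∏ μ ∈ s.erase ν, (ξ ν - ξ μ) ^ 2) := by
  have hν0 := hξ ν hν
  have hξ' : ∀ μ ∈ s.erase ν, ξ μ ≠ 0 := fun μ hμ => hξ μ (mem_of_mem_erase hμ)
  have hP : ∏ μ ∈ s.erase ν, ξ μ ^ 2 ≠ 0 :=
    prod_ne_zero_iff.2 fun μ hμ => pow_ne_zero 2 (hξ' μ hμ)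
  have hD : ∏ μ ∈ s.erase ν, (ξ ν - ξ μ) ^ 2 ≠ 0 := prod_ne_zero_iff.2 fun μ hμ =>
    pow_ne_zero 2 (sub_ne_zero.2 fun h => ne_of_mem_erase hμ (hinj (mem_of_mem_erase hμ) hν h.symm))
  have hνx : ξ ν - x ≠ 0 := sub_ne_zero.2 (hξx ν hν)
  have hexp : 2 * (#s : ℤ) - 3 = 2 * (#(s.erase ν) : ℤ) - 1 := by
    rw [card_erase_of_mem hν, Nat.cast_sub (card_pos.2 ⟨ν, hν⟩)]
    ring
  rw [sqCoeff, denom, ← mul_prod_erase s _ hν]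
  simp only [neg_add_eq_sub]
  rw [prod_one_div_sub_one_div_sq hξ' hν0, hexp, zpow_two_mul_sub_one hν0]
  field_simp

lemma linCoeff_one_div (hξ : ∀ μ ∈ s, ξ μ ≠ 0) (hx : x ≠ 0) (hinj : Set.InjOn ξ s)
    (hξx : ∀ μ ∈ s, ξ μ ≠ x) {ν : ι} (hν : ν ∈ s) :
    (x * ∏ μ ∈ s, ξ μ ^ 2)⁻¹ * linCoeff (1 / x) (fun μ => 1 / ξ μ) s ν =
      -(ξ ν ^ (2 * (#s : ℤ) - 2)) * (x + 2 * (ξ ν - x) * ∑ μ ∈ s.erase ν, ξ μ / (ξ ν - ξ μ)) /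
        ((ξ ν - x) ^ 2 * ∏ μ ∈ s.erase ν, (ξ ν - ξ μ) ^ 2) := by
  have hν0 := hξ ν hν
  have hD : ∏ μ ∈ s.erase ν, (ξ ν - ξ μ) ^ 2 ≠ 0 := prod_ne_zero_iff.2 fun μ hμ =>
    pow_ne_zero 2 (sub_ne_zero.2 fun h => ne_of_mem_erase hμ (hinj (mem_of_mem_erase hμ) hν h.symm))
  have hνx : ξ ν - x ≠ 0 := sub_ne_zero.2 (hξx ν hν)
  have hexp : ξ ν ^ (2 * (#s : ℤ) - 2) = ξ ν ^ (2 * (#s : ℤ) - 3) * ξ ν := by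
    rw [← zpow_add_one₀ hν0]
    ring_nf
  rw [linCoeff, neg_mul, mul_neg, ← mul_assoc, sqCoeff_one_div hξ hx hinj hξx hν, logDerivDenom,
    hexp]
  simp only [neg_add_eq_sub]
  rw [inv_one_div_sub_one_div hx hν0,
    sum_congr rfl fun μ hμ => inv_one_div_sub_one_div (hξ μ (mem_of_mem_erase hμ)) hν0]
  simp only [mul_div_right_comm _ (ξ ν), ← sum_mul]
  field_simp

theorem one_div_mul_prod_sq_eq (hξ : ∀ μ ∈ s, ξ μ ≠ 0) (hx : x ≠ 0) (hinj : Set.InjOn ξ s)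
    (hξx : ∀ μ ∈ s, ξ μ ≠ x) {t : ℝ} (ht : (1 + x * t) * ∏ μ ∈ s, (1 + ξ μ * t) ^ 2 ≠ 0) :
    1 / ((1 + x * t) * ∏ μ ∈ s, (1 + ξ μ * t) ^ 2) =
      (x ^ (2 * (#s : ℤ) - 1) / ∏ ν ∈ s, (x - ξ ν) ^ 2) / (t + 1 / x) +
        ∑ ν ∈ s,
          ((-(ξ ν ^ (2 * (#s : ℤ) - 2)) *
                (x + 2 * (ξ ν - x) * ∑ μ ∈ s.erase ν, ξ μ / (ξ ν - ξ μ)) /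
              ((ξ ν - x) ^ 2 * ∏ μ ∈ s.erase ν, (ξ ν - ξ μ) ^ 2)) / (t + 1 / ξ ν) +
            (ξ ν ^ (2 * (#s : ℤ) - 3) / ((ξ ν - x) * ∏ μ ∈ s.erase ν, (ξ ν - ξ μ) ^ 2)) /
              (t + 1 / ξ ν) ^ 2) := by
  rw [mul_prod_sq_eq_denom hξ hx] at ht ⊢
  have hinj' : Set.InjOn (fun μ => 1 / ξ μ) s := fun μ hμ ν hν h =>
    hinj hμ hν (by simpa using h)
  have hξx' : ∀ μ ∈ s, 1 / ξ μ ≠ 1 / x := fun μ hμ h => hξx μ hμ (by simpa using h)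
  rw [one_div, mul_inv, inv_denom_eq_expansion hinj' hξx' (right_ne_zero_of_mul ht), expansion,
    mul_add, mul_sum, ← mul_div_assoc, simpleCoeff_one_div hξ hx]
  refine congrArg _ (sum_congr rfl fun ν hν => ?_)
  rw [mul_add, ← mul_div_assoc, ← mul_div_assoc, linCoeff_one_div hξ hx hinj hξx hν,
    sqCoeff_one_div hξ hx hinj hξx hν]

end PartialFraction

theorem stmt_16_general (K : ℕ) (M m : ℕ) (hM : M = K + 1)
    (hm : m = 2 * M - 1)
    (ξ : Fin K → ℝ) (ξM : ℝ)
    (hξ : ∀ ν, ξ ν ≠ 0) (hξM : ξM ≠ 0)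
    (hdist : Function.Injective ξ) (hdistM : ∀ ν, ξ ν ≠ ξM) :
    ∀ t : ℝ, (1 + ξM * t) * ∏ ν : Fin K, (1 + ξ ν * t) ^ 2 ≠ 0 →
      1 / ((1 + ξM * t) * ∏ ν : Fin K, (1 + ξ ν * t) ^ 2) =
        (ξM ^ ((m : ℤ) - 2) / ∏ ν : Fin K, (ξM - ξ ν) ^ 2) / (t + 1 / ξM) +
        ∑ ν : Fin K,
          ((-(ξ ν ^ ((m : ℤ) - 3)) *
              (ξM + 2 * (ξ ν - ξM) * ∑ μ ∈ univ.erase ν, ξ μ / (ξ ν - ξ μ)) /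
              ((ξ ν - ξM) ^ 2 * ∏ μ ∈ univ.erase ν, (ξ ν - ξ μ) ^ 2)) /
            (t + 1 / ξ ν) +
          (ξ ν ^ ((m : ℤ) - 4) /
              ((ξ ν - ξM) * ∏ μ ∈ univ.erase ν, (ξ ν - ξ μ) ^ 2)) /
            (t + 1 / ξ ν) ^ 2) := by
  intro t ht
  have hexp : (m : ℤ) - 2 = 2 * #(univ : Finset (Fin K)) - 1 ∧
      (m : ℤ) - 3 = 2 * #(univ : Finset (Fin K)) - 2 ∧
      (m : ℤ) - 4 = 2 * #(univ : Finset (Fin K)) - 3 := by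
    simp only [card_univ, Fintype.card_fin]
    omega
  rw [hexp.1, hexp.2.1, hexp.2.2]
  exact PartialFraction.one_div_mul_prod_sq_eq (fun μ _ => hξ μ) hξM hdist.injOn
    (fun μ _ => hdistM μ) ht

/-- partial fraction decomposition for real poles of order 2
plus a simple real pole.  With `M = K + 1 ≥ 2` distinct nonzero reals
`ξ_1,…,ξ_{M−1}, ξ_M`, `m = 2M − 1` and
`ω_m(t) = (1+ξ_M t)∏_{ν=1}^{M−1}(1+ξ_ν t)²`, one has, wherever `ω_m(t) ≠ 0`,
`1/ω_m(t) = c_M'/(t+1/ξ_M) + ∑_{ν=1}^{M−1}[c_ν'/(t+1/ξ_ν) + d_ν'/(t+1/ξ_ν)²]`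
with the stated coefficients. -/
theorem stmt_16 (K : ℕ) (hK : 1 ≤ K) (M m : ℕ) (hM : M = K + 1)
    (hm : m = 2 * M - 1)
    (ξ : Fin K → ℝ) (ξM : ℝ)
    (hξ : ∀ ν, ξ ν ≠ 0) (hξM : ξM ≠ 0)
    (hdist : Function.Injective ξ) (hdistM : ∀ ν, ξ ν ≠ ξM) :
    ∀ t : ℝ, (1 + ξM * t) * ∏ ν : Fin K, (1 + ξ ν * t) ^ 2 ≠ 0 →
      1 / ((1 + ξM * t) * ∏ ν : Fin K, (1 + ξ ν * t) ^ 2) =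
        (ξM ^ ((m : ℤ) - 2) / ∏ ν : Fin K, (ξM - ξ ν) ^ 2) / (t + 1 / ξM) +
        ∑ ν : Fin K,
          ((-(ξ ν ^ ((m : ℤ) - 3)) *
              (ξM + 2 * (ξ ν - ξM) * ∑ μ ∈ univ.erase ν, ξ μ / (ξ ν - ξ μ)) /
              ((ξ ν - ξM) ^ 2 * ∏ μ ∈ univ.erase ν, (ξ ν - ξ μ) ^ 2)) /
            (t + 1 / ξ ν) +
          (ξ ν ^ ((m : ℤ) - 4) /
              ((ξ ν - ξM) * ∏ μ ∈ univ.erase ν, (ξ ν - ξ μ) ^ 2)) /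
            (t + 1 / ξ ν) ^ 2) :=
  stmt_16_general K M m hM hm ξ ξM hξ hξM hdist hdistM
end
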